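/- For every real λ ≠ 0 and every real t, letting D be the operator (Df)(λ) = f′(λ)/s(λ): applying D three times to the function λ ↦ s(λ)^{−t} gives (D(D(D(s^{−t}))))(λ) = −t(t+2)·[(t+1)·c(λ)·s(λ)^{−t−4} + 4(t+4)·c(λ)·s(λ)^{−t−6}]. -/

import Mathlib

/-- `sh λ = e^λ - e^{-λ}`. -/
noncomputable def sh (l : ℝ) : ℝ := Real.exp l - Real.exp (-l)

/-- `ch λ = e^λ + e^{-λ}`. -/
noncomputable def ch (l : ℝ) : ℝ := Real.exp l + Real.exp (-l)

/-- The operator `(Df)(λ) = f'(λ)/s(λ)`. -/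
noncomputable def Dop (f : ℝ → ℝ) : ℝ → ℝ := fun l => deriv f l / sh l

/-!
Since `s' = c` and `c' = s`, the operator `D` maps `s^p` to `p c s^(p-2)` and, by the identity
`c² = s² + 4`, maps `c s^p` to `(p+1) s^p + 4p s^(p-2)`. Starting from `s^(-t)`, the three
applications of `D` therefore alternate between the forms `c · (powers of s)` and
`(powers of s)`, and the claimed formula is the bookkeeping of the coefficients.
-/

open Set

lemma sh_eq_two_mul_sinh : sh = fun x => 2 * Real.sinh x := by
  funext x
  rw [sh, Real.sinh_eq]
  ring

lemma ch_eq_two_mul_cosh : ch = fun x => 2 * Real.cosh x := by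
  funext x
  rw [ch, Real.cosh_eq]
  ring

lemma sh_ne_zero {x : ℝ} (hx : x ≠ 0) : sh x ≠ 0 := by
  simpa [sh_eq_two_mul_sinh] using hx

lemma ch_sq (x : ℝ) : ch x ^ 2 = sh x ^ 2 + 4 := by
  rw [sh_eq_two_mul_sinh, ch_eq_two_mul_cosh]
  linear_combination 4 * Real.cosh_sq x

lemma hasDerivAt_sh (x : ℝ) : HasDerivAt sh (ch x) x := by
  rw [sh_eq_two_mul_sinh, ch_eq_two_mul_cosh]
  exact (Real.hasDerivAt_sinh x).const_mul 2

lemma hasDerivAt_ch (x : ℝ) : HasDerivAt ch (sh x) x := by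
  rw [sh_eq_two_mul_sinh, ch_eq_two_mul_cosh]
  exact (Real.hasDerivAt_cosh x).const_mul 2

lemma hasDerivAt_sh_rpow {x : ℝ} (hx : x ≠ 0) (p : ℝ) :
    HasDerivAt (fun y => sh y ^ p) (p * sh x ^ (p - 1) * ch x) x :=
  (Real.hasDerivAt_rpow_const (Or.inl (sh_ne_zero hx))).comp x (hasDerivAt_sh x)

lemma Dop_eq_of_hasDerivAt {f : ℝ → ℝ} {f' x : ℝ} (h : HasDerivAt f f' x) :
    Dop f x = f' / sh x := by
  rw [Dop, h.deriv]

lemma Dop_const_mul (a : ℝ) (f : ℝ → ℝ) (x : ℝ) : Dop (fun y => a * f y) x = a * Dop f x := by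
  simp only [Dop, deriv_const_mul_field, mul_div_assoc]

lemma eqOn_Dop_of_eqOn {f g : ℝ → ℝ} {U : Set ℝ} (hU : IsOpen U) (h : EqOn f g U) :
    EqOn (Dop f) (Dop g) U := fun x hx => by
  rw [Dop, Dop, Filter.EventuallyEq.deriv_eq (Filter.eventuallyEq_of_mem (hU.mem_nhds hx) h)]

lemma Dop_add {f g : ℝ → ℝ} {x : ℝ} (hf : DifferentiableAt ℝ f x)
    (hg : DifferentiableAt ℝ g x) : Dop (fun y => f y + g y) x = Dop f x + Dop g x := by
  rw [Dop, Dop, Dop, deriv_fun_add hf hg, add_div]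

lemma Dop_sh_rpow {x : ℝ} (hx : x ≠ 0) (p : ℝ) :
    Dop (fun y => sh y ^ p) x = p * (ch x * sh x ^ (p - 2)) := by
  have hs := sh_ne_zero hx
  rw [Dop_eq_of_hasDerivAt (hasDerivAt_sh_rpow hx p), Real.rpow_sub_one hs,
    show sh x ^ (p - 2) = sh x ^ p / sh x ^ 2 by simpa using Real.rpow_sub_natCast hs p 2]
  field_simp

lemma Dop_ch_mul_sh_rpow {x : ℝ} (hx : x ≠ 0) (p : ℝ) :
    Dop (fun y => ch y * sh y ^ p) x = (p + 1) * sh x ^ p + 4 * p * sh x ^ (p - 2) := by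
  have hs := sh_ne_zero hx
  have hd : HasDerivAt (fun y => ch y * sh y ^ p) _ x :=
    (hasDerivAt_ch x).mul (hasDerivAt_sh_rpow hx p)
  rw [Dop_eq_of_hasDerivAt hd, Real.rpow_sub_one hs,
    show sh x ^ (p - 2) = sh x ^ p / sh x ^ 2 by simpa using Real.rpow_sub_natCast hs p 2]
  field_simp
  linear_combination p * sh x ^ p * ch_sq x

theorem stmt9 (l : ℝ) (hl : l ≠ 0) (t : ℝ) :
    Dop (Dop (Dop (fun x : ℝ => Real.rpow (sh x) (-t)))) l =
      -t * (t + 2) * ((t + 1) * ch l * Real.rpow (sh l) (-t - 4)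
        + 4 * (t + 4) * ch l * Real.rpow (sh l) (-t - 6)) := by
  simp only [Real.rpow_eq_pow]
  have hU : IsOpen ({0}ᶜ : Set ℝ) := isOpen_compl_singleton
  have hD : EqOn (Dop fun y => sh y ^ (-t)) (fun y => -t * (ch y * sh y ^ (-t - 2))) {0}ᶜ :=
    fun y hy => Dop_sh_rpow hy (-t)
  have hDD : EqOn (Dop (Dop fun y => sh y ^ (-t)))
      (fun y => -t * (-t - 1) * sh y ^ (-t - 2) + -t * (4 * (-t - 2)) * sh y ^ (-t - 4))
      {0}ᶜ := fun y hy => by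
    rw [eqOn_Dop_of_eqOn hU hD hy, Dop_const_mul, Dop_ch_mul_sh_rpow hy]
    ring_nf
  have hd : ∀ a p : ℝ, DifferentiableAt ℝ (fun y => a * sh y ^ p) l := fun a p =>
    ((hasDerivAt_sh_rpow hl p).const_mul a).differentiableAt
  rw [eqOn_Dop_of_eqOn hU hDD hl, Dop_add (hd _ _) (hd _ _), Dop_const_mul, Dop_const_mul,
    Dop_sh_rpow hl, Dop_sh_rpow hl]
  ring_nf
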